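/- Let c > 0, α ∈ (0, ∞), v ∈ [-1, 1] with c - αv > 0. Then ∫_0^∞ e^{αvt} · r(t) · e^{-∫_0^t r(s) ds} dt ≤ sup_t [r(t)/(r(t) - αv)] whenever r: [0,∞) → (0,∞) is measurable with r(t) - αv > 0 for all t and ∫_0^∞ r(s) ds = ∞. More precisely, ∫_0^∞ e^{αvt} r(t) e^{-∫_0^t r(s)ds} dt = ∫_0^∞ [r(t)/(r(t)-αv)] (r(t)-αv) e^{-∫_0^t (r(s)-αv)ds} dt, and since ∫_0^∞ (r(t)-αv)e^{-∫_0^t(r(s)-αv)ds} dt ≤ 1, the integral is bounded by sup_t r(t)/(r(t)-αv). -/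

import Mathlib

/-!
Tilting: with `c = α v`, the integrand `e^{ct} r(t) e^{-∫₀ᵗ r}` equals
`r(t)/(r(t) - c) · q(t) e^{-∫₀ᵗ q}` for the tilted rate `q = r - c > 0`. Since
`q e^{-∫₀ᵗ q}` is minus the derivative of the survival function `e^{-∫₀ᵗ q}`, which starts at
`1` and stays nonnegative, its integral over `(0, ∞)` is at most `1`; the ratio is bounded by
its supremum.
-/

open MeasureTheory Set Real

section Survival

variable {q : ℝ → ℝ}

theorem hasDerivAt_exp_neg_integral (hq : Continuous q) (t : ℝ) :
    HasDerivAt (fun t => exp (-∫ s in (0 : ℝ)..t, q s))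
      (-(q t * exp (-∫ s in (0 : ℝ)..t, q s))) t := by
  have hint : HasDerivAt (fun t => ∫ s in (0 : ℝ)..t, q s) (q t) t :=
    intervalIntegral.integral_hasDerivAt_right (hq.intervalIntegrable 0 t)
      (hq.stronglyMeasurableAtFilter _ _) hq.continuousAt
  simpa [mul_comm] using hint.fun_neg.exp

theorem continuous_mul_exp_neg_integral (hq : Continuous q) :
    Continuous fun t => q t * exp (-∫ s in (0 : ℝ)..t, q s) :=
  hq.mul (continuous_iff_continuousAt.2 fun t => (hasDerivAt_exp_neg_integral hq t).continuousAt)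

theorem intervalIntegral_mul_exp_neg_integral (hq : Continuous q) (T : ℝ) :
    ∫ t in (0 : ℝ)..T, q t * exp (-∫ s in (0 : ℝ)..t, q s) =
      1 - exp (-∫ s in (0 : ℝ)..T, q s) := by
  have hFTC := intervalIntegral.integral_eq_sub_of_hasDerivAt
    (fun t _ => hasDerivAt_exp_neg_integral hq t)
    ((continuous_mul_exp_neg_integral hq).neg.intervalIntegrable 0 T)
  rw [intervalIntegral.integral_neg, intervalIntegral.integral_same, neg_zero, exp_zero] at hFTC
  linarith

theorem intervalIntegral_mul_exp_neg_integral_le_one (hq : Continuous q) (T : ℝ) :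
    ∫ t in (0 : ℝ)..T, q t * exp (-∫ s in (0 : ℝ)..t, q s) ≤ 1 := by
  rw [intervalIntegral_mul_exp_neg_integral hq]
  linarith [exp_pos (-∫ s in (0 : ℝ)..T, q s)]

theorem integrableOn_Ioi_mul_exp_neg_integral (hq : Continuous q) (hq_nonneg : ∀ t, 0 ≤ q t) :
    IntegrableOn (fun t => q t * exp (-∫ s in (0 : ℝ)..t, q s)) (Ioi 0) := by
  refine integrableOn_Ioi_of_intervalIntegral_norm_bounded 1 0
    (fun _ => (continuous_mul_exp_neg_integral hq).integrableOn_Ioc) Filter.tendsto_id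
    (Filter.Eventually.of_forall fun T => ?_)
  calc ∫ t in (0 : ℝ)..T, ‖q t * exp (-∫ s in (0 : ℝ)..t, q s)‖
      = ∫ t in (0 : ℝ)..T, q t * exp (-∫ s in (0 : ℝ)..t, q s) :=
        intervalIntegral.integral_congr fun t _ =>
          norm_of_nonneg (mul_nonneg (hq_nonneg t) (exp_pos _).le)
    _ ≤ 1 := intervalIntegral_mul_exp_neg_integral_le_one hq T

theorem setIntegral_Ioi_mul_exp_neg_integral_le_one (hq : Continuous q)
    (hq_nonneg : ∀ t, 0 ≤ q t) :
    ∫ t in Ioi (0 : ℝ), q t * exp (-∫ s in (0 : ℝ)..t, q s) ≤ 1 :=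
  le_of_tendsto (intervalIntegral_tendsto_integral_Ioi 0
      (integrableOn_Ioi_mul_exp_neg_integral hq hq_nonneg) Filter.tendsto_id)
    (Filter.Eventually.of_forall (intervalIntegral_mul_exp_neg_integral_le_one hq))

end Survival

theorem exp_mul_mul_exp_neg_integral_eq_tilted {r : ℝ → ℝ} {c t : ℝ}
    (hr : IntervalIntegrable r volume 0 t) (hrc : r t - c ≠ 0) :
    exp (c * t) * r t * exp (-∫ s in (0 : ℝ)..t, r s) =
      r t / (r t - c) * ((r t - c) * exp (-∫ s in (0 : ℝ)..t, (r s - c))) := by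
  rw [intervalIntegral.integral_sub hr intervalIntegrable_const, intervalIntegral.integral_const,
    smul_eq_mul, sub_zero, show -((∫ s in (0 : ℝ)..t, r s) - t * c) =
      c * t + -∫ s in (0 : ℝ)..t, r s by ring, exp_add]
  field_simp

theorem stmt_13_general (α v : ℝ) (r : ℝ → ℝ)
    (hr_cont : Continuous r) (hr_pos : ∀ t, 0 < r t)
    (hr_tilt : ∀ t, 0 < r t - α * v)
    (hBdd : BddAbove (Set.range fun t : Set.Ici (0 : ℝ) => r t / (r t - α * v))) :
    ∫ t in Ioi (0 : ℝ), exp (α * v * t) * r t * exp (-(∫ s in (0 : ℝ)..t, r s)) ≤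
      ⨆ t : Set.Ici (0 : ℝ), r t / (r t - α * v) := by
  set M := ⨆ t : Set.Ici (0 : ℝ), r t / (r t - α * v)
  set g : ℝ → ℝ := fun t => (r t - α * v) * exp (-∫ s in (0 : ℝ)..t, (r s - α * v))
  have hq_cont : Continuous fun t => r t - α * v := hr_cont.sub continuous_const
  have hq_nonneg : ∀ t, 0 ≤ r t - α * v := fun t => (hr_tilt t).le
  have hg_int : IntegrableOn g (Ioi 0) := integrableOn_Ioi_mul_exp_neg_integral hq_cont hq_nonneg
  have hratio_le : ∀ t, 0 ≤ t → r t / (r t - α * v) ≤ M := fun t ht =>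
    le_ciSup hBdd (⟨t, ht⟩ : Ici (0 : ℝ))
  have hM_nonneg : 0 ≤ M := (div_pos (hr_pos 0) (hr_tilt 0)).le.trans (hratio_le 0 le_rfl)
  have hbound : ∀ t ∈ Ioi (0 : ℝ),
      exp (α * v * t) * r t * exp (-∫ s in (0 : ℝ)..t, r s) ≤ M * g t := fun t ht => by
    rw [exp_mul_mul_exp_neg_integral_eq_tilted (hr_cont.intervalIntegrable 0 t) (hr_tilt t).ne']
    exact mul_le_mul_of_nonneg_right (hratio_le t (le_of_lt ht))
      (mul_nonneg (hq_nonneg t) (exp_pos _).le)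
  calc ∫ t in Ioi (0 : ℝ), exp (α * v * t) * r t * exp (-∫ s in (0 : ℝ)..t, r s)
      ≤ ∫ t in Ioi (0 : ℝ), M * g t := by
        refine integral_mono_of_nonneg (ae_of_all _ fun t => ?_) (hg_int.const_mul M)
          (ae_restrict_of_forall_mem measurableSet_Ioi hbound)
        exact mul_nonneg (mul_nonneg (exp_pos _).le (hr_pos t).le) (exp_pos _).le
    _ = M * ∫ t in Ioi (0 : ℝ), g t := integral_const_mul M g
    _ ≤ M := mul_le_of_le_one_right hM_nonneg
        (setIntegral_Ioi_mul_exp_neg_integral_le_one hq_cont hq_nonneg)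

theorem stmt_13 (α v : ℝ) (r : ℝ → ℝ)
    (hα : 0 < α) (hv : v ∈ Icc (-1 : ℝ) 1)
    (hr_cont : Continuous r) (hr_pos : ∀ t, 0 < r t)
    (hr_tilt : ∀ t, 0 < r t - α * v)
    (hr_div : ∫⁻ t in Ioi (0 : ℝ), ENNReal.ofReal (r t) = ⊤)
    (hBdd : BddAbove (Set.range fun t : Set.Ici (0 : ℝ) => r t / (r t - α * v))) :
    ∫ t in Ioi (0 : ℝ), exp (α * v * t) * r t * exp (-(∫ s in (0 : ℝ)..t, r s)) ≤
      ⨆ t : Set.Ici (0 : ℝ), r t / (r t - α * v) :=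
  stmt_13_general α v r hr_cont hr_pos hr_tilt hBdd
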